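/- arXiv:1612.05207 — 3 statements merged into one kernel-verified Lean document; each statement's English description precedes it below -/
import Mathlib

section
/- With the recursions Uₙ = (1/n) Σ_{k=0}^{n−1} U_k L_{G_{n−k−1}} (U₀ = 1), the non-recursive Cary formula holds: Uₙ = Σ over all strictly decreasing integer sequences n > m₁ > m₂ > ⋯ > m_r > 0 (including the empty sequence r = 0) of the product (L_{G_{m_r − 1}}/m_r) ⋯ (L_{G_{m₁−m₂−1}}/m₁) (L_{G_{n−m₁−1}}/n). -/
/-!
Splitting a subset of `(0, n)` off at its largest element `k` turns the sum over subsets of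
`(0, n)` into `L_{G_{n-1}}/n` (the empty subset) plus, for each `0 < k < n`, the sum over subsets
of `(0, k)` multiplied on the right by `L_{G_{n-k-1}}/n`. So the right-hand side of Cary's formula
obeys the same recursion as `Uₙ`, and the formula follows by strong induction on `n`.
-/

open Finset

/-- The term of the Cary formula associated to the outer index `n` and the
strictly decreasing sequence `[m₁, m₂, …, m_r]` (listed with `m₁` largest):
`caryTerm L n [m₁, …, m_r] = (L_{G_{m_r−1}}/m_r) ⋯ (L_{G_{m₁−m₂−1}}/m₁) (L_{G_{n−m₁−1}}/n)`,
defined recursively by `caryTerm L n [] = L_{G_{n−1}}/n` and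
`caryTerm L n (m₁ :: ms) = caryTerm L m₁ ms * (L_{G_{n−m₁−1}}/n)`. -/
def caryTerm {R : Type*} [Ring R] [Algebra ℚ R] (L : ℕ → R) : ℕ → List ℕ → R
  | n, [] => (n : ℚ)⁻¹ • L (n - 1)
  | n, (m :: ms) => caryTerm L m ms * ((n : ℚ)⁻¹ • L (n - m - 1))

theorem Finset.sum_powerset_eq_add_sum_by_max {α M : Type*} [LinearOrder α] [AddCommMonoid M]
    (s : Finset α) (F : Finset α → M) :
    ∑ t ∈ s.powerset, F t =
      F ∅ + ∑ a ∈ s, ∑ t ∈ {x ∈ s | x < a}.powerset, F (insert a t) := by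
  induction s using Finset.induction_on_max with
  | empty => simp
  | insert a s hlt ih =>
    have ha : a ∉ s := fun h => lt_irrefl a (hlt a h)
    have below_a : {x ∈ insert a s | x < a} = s := by
      rw [filter_insert, if_neg (lt_irrefl a), filter_true_of_mem hlt]
    have below_mem : ∀ b ∈ s, ∑ t ∈ {x ∈ insert a s | x < b}.powerset, F (insert b t) =
        ∑ t ∈ {x ∈ s | x < b}.powerset, F (insert b t) := by
      intro b hb
      rw [filter_insert, if_neg (hlt b hb).not_gt]
    rw [sum_powerset_insert ha, ih, sum_insert ha, below_a, sum_congr rfl below_mem]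
    exact (add_assoc _ _ _).trans (congrArg _ (add_comm _ _))

section Cary

variable {R : Type*} [Ring R] [Algebra ℚ R] (L : ℕ → R)

theorem caryTerm_sort_insert {n k : ℕ} {t : Finset ℕ} (ht : ∀ m ∈ t, m < k) :
    caryTerm L n ((insert k t).sort (· ≥ ·)) =
      caryTerm L k (t.sort (· ≥ ·)) * ((n : ℚ)⁻¹ • L (n - k - 1)) := by
  rw [sort_insert _ (fun m hm => (ht m hm).le) fun hk => lt_irrefl k (ht k hk)]
  rfl

theorem sum_caryTerm_eq_smul_add_sum (n : ℕ) :
    ∑ s ∈ (Ioo 0 n).powerset, caryTerm L n (s.sort (· ≥ ·)) =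
      (n : ℚ)⁻¹ • (L (n - 1) + ∑ k ∈ Ioo 0 n,
        (∑ s ∈ (Ioo 0 k).powerset, caryTerm L k (s.sort (· ≥ ·))) * L (n - k - 1)) := by
  rw [sum_powerset_eq_add_sum_by_max, smul_add, smul_sum]
  refine congrArg₂ (· + ·) (by rw [sort_empty]; rfl) (sum_congr rfl fun k hk => ?_)
  have below_k : {x ∈ Ioo 0 n | x < k} = Ioo 0 k := by
    rw [Ioo_filter_lt, min_eq_right (mem_Ioo.mp hk).2.le]
  rw [below_k, ← mul_smul_comm, sum_mul]
  exact sum_congr rfl fun t ht =>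
    caryTerm_sort_insert L fun m hm => (mem_Ioo.mp (mem_powerset.mp ht hm)).2

end Cary

/-- Cary's non-recursive formula: if `U₀ = 1` and
`Uₙ = (1/n) Σ_{k=0}^{n−1} U_k L_{G_{n−k−1}}` for `n ≥ 1`, then `Uₙ` equals the
sum over all strictly decreasing integer sequences `n > m₁ > ⋯ > m_r > 0`
(including the empty one), identified with subsets of `(0, n)` sorted in
decreasing order, of the products
`(L_{G_{m_r−1}}/m_r) ⋯ (L_{G_{m₁−m₂−1}}/m₁) (L_{G_{n−m₁−1}}/n)`. -/
theorem cary_formula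
    {R : Type*} [Ring R] [Algebra ℚ R]
    (U L : ℕ → R)
    (hU0 : U 0 = 1)
    (hU : ∀ n : ℕ, 1 ≤ n → U n = (n : ℚ)⁻¹ • ∑ k ∈ range n, U k * L (n - k - 1)) :
    ∀ n : ℕ, 1 ≤ n →
      U n = ∑ s ∈ (Finset.Ioo 0 n).powerset, caryTerm L n (s.sort (· ≥ ·)) := by
  intro n
  induction n using Nat.strong_induction_on with
  | _ n ih =>
    intro hn
    have range_eq : range n = insert 0 (Ioo 0 n) := by
      rw [range_eq_Ico, Ioo_insert_left hn]
    rw [hU n hn, sum_caryTerm_eq_smul_add_sum, range_eq, sum_insert (by simp), hU0, one_mul,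
      Nat.sub_zero]
    congr 2
    refine sum_congr rfl fun k hk => ?_
    rw [ih k (mem_Ioo.mp hk).2 (mem_Ioo.mp hk).1]
end

section
/- Let G₁ = S_H H' + P_H F₁ and G₂ = S_H H' + P_H F₂ be two generators differing by a secular term, with U₁, U₂ the corresponding Lie–Deprit transforms (dU_i/dα = U_i L_{G_i}, U_i(0)=1). Then the connecting transform U₂₁ = U₂ U₁⁻¹ satisfies dU₂₁/dα = U₂₁ L_{W} with generator W = U₁ P_H (F₂ − F₁); moreover, using the intertwining U₁ P_H = P₀ U₁, the generator W = P₀ U₁ (F₂ − F₁) is secular (fixed by composing with P₀ in the sense P₀ W = W). -/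
/-!
The `S_H H'` parts of the two generators cancel, so `G₂ − G₁ = P_H (F₂ − F₁)`. By the product
rule, `(U₂ V₁)' = U₂ (L_{G₂} − L_{G₁}) V₁ = U₂ L_{G₂ − G₁} V₁`, and canonical invariance moves
`V₁` past the Lie operator, turning it into `L_{U₁ (G₂ − G₁)}`. Secularity is
`P₀ U₁ P_H = U₁ P_H P_H = U₁ P_H`.
-/

open ContinuousLinearMap

theorem HasDerivAt.clm_comp_sub_generators {𝕜 E : Type*} [NontriviallyNormedField 𝕜]
    [NormedAddCommGroup E] [NormedSpace 𝕜 E] {U V : 𝕜 → E →L[𝕜] E} {X Y : E →L[𝕜] E} {a : 𝕜}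
    (hU : HasDerivAt U (U a ∘L X) a) (hV : HasDerivAt V (-(Y ∘L V a)) a) :
    HasDerivAt (fun b => U b ∘L V b) (U a ∘L (X - Y) ∘L V a) a := by
  convert hU.clm_comp hV using 1
  rw [sub_comp, comp_sub, comp_neg, comp_assoc, sub_eq_add_neg]

theorem ContinuousLinearMap.apply_eq_of_comp_eq_comp_of_idempotent {R M N : Type*} [Semiring R]
    [AddCommMonoid M] [TopologicalSpace M] [Module R M]
    [AddCommMonoid N] [TopologicalSpace N] [Module R N]
    {P : M →L[R] M} {Q : N →L[R] N} {U : M →L[R] N}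
    (hP : P ∘L P = P) (hUPQ : U ∘L P = Q ∘L U) (x : M) :
    Q (U (P x)) = U (P x) := by
  rw [← comp_apply Q, ← hUPQ, comp_apply, ← comp_apply P, hP]

theorem connecting_transform_secular_generator_general
    {A : Type*} [NormedAddCommGroup A] [NormedSpace ℝ A]
    (ℒ : A →ₗ[ℝ] (A →L[ℝ] A))
    (P₀ : A →L[ℝ] A)
    (SH PH U₁ V₁ U₂ : ℝ → (A →L[ℝ] A))
    (H' F₁ F₂ G₁ G₂ : ℝ → A)
    (hPHproj : ∀ α : ℝ, PH α ∘L PH α = PH α)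
    (hG₁ : ∀ α : ℝ, G₁ α = SH α (H' α) + PH α (F₁ α))
    (hG₂ : ∀ α : ℝ, G₂ α = SH α (H' α) + PH α (F₂ α))
    (hU₂ : ∀ α : ℝ, HasDerivAt U₂ (U₂ α ∘L ℒ (G₂ α)) α)
    (hV₁ : ∀ α : ℝ, HasDerivAt V₁ (-(ℒ (G₁ α) ∘L V₁ α)) α)
    (hcanon : ∀ (F : A) (α : ℝ), ℒ F ∘L V₁ α = V₁ α ∘L ℒ (U₁ α F))
    (hintertwine : ∀ α : ℝ, U₁ α ∘L PH α = P₀ ∘L U₁ α) :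
    (∀ α : ℝ, HasDerivAt (fun β => U₂ β ∘L V₁ β)
        ((U₂ α ∘L V₁ α) ∘L ℒ (U₁ α (PH α (F₂ α - F₁ α)))) α) ∧
    (∀ α : ℝ, P₀ (U₁ α (PH α (F₂ α - F₁ α))) = U₁ α (PH α (F₂ α - F₁ α))) := by
  refine ⟨fun α => ?_, fun α =>
    apply_eq_of_comp_eq_comp_of_idempotent (hPHproj α) (hintertwine α) _⟩
  have hdiff : G₂ α - G₁ α = PH α (F₂ α - F₁ α) := by
    rw [hG₁, hG₂, map_sub]
    abel
  have hderiv := (hU₂ α).clm_comp_sub_generators (hV₁ α)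
  rwa [← map_sub, hdiff, hcanon, ← comp_assoc] at hderiv

/-- Two normalising generators `G₁ = S_H H' + P_H F₁` and `G₂ = S_H H' + P_H F₂`
differing by their uniqueness conditions yield Lie–Deprit transforms `U₁`, `U₂`
(with `V₁ = U₁⁻¹`) whose connecting transform `U₂₁ = U₂ V₁` satisfies
`dU₂₁/dα = U₂₁ L_W` with generator `W = U₁ P_H (F₂ − F₁)`; moreover, by the
intertwining `U₁ P_H = P₀ U₁`, the generator `W` is secular: `P₀ W = W`. -/
theorem connecting_transform_secular_generator
    {A : Type*} [NormedAddCommGroup A] [NormedSpace ℝ A]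
    (ℒ : A →ₗ[ℝ] (A →L[ℝ] A))
    (P₀ : A →L[ℝ] A) (hP₀ : P₀ ∘L P₀ = P₀)
    (SH PH U₁ V₁ U₂ : ℝ → (A →L[ℝ] A))
    (H' F₁ F₂ G₁ G₂ : ℝ → A)
    (hPHproj : ∀ α : ℝ, PH α ∘L PH α = PH α)
    (hG₁ : ∀ α : ℝ, G₁ α = SH α (H' α) + PH α (F₁ α))
    (hG₂ : ∀ α : ℝ, G₂ α = SH α (H' α) + PH α (F₂ α))
    (hU₂ : ∀ α : ℝ, HasDerivAt U₂ (U₂ α ∘L ℒ (G₂ α)) α)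
    (hV₁ : ∀ α : ℝ, HasDerivAt V₁ (-(ℒ (G₁ α) ∘L V₁ α)) α)
    (hinv : ∀ α : ℝ, U₁ α ∘L V₁ α = 1 ∧ V₁ α ∘L U₁ α = 1)
    (hcanon : ∀ (F : A) (α : ℝ), ℒ F ∘L V₁ α = V₁ α ∘L ℒ (U₁ α F))
    (hintertwine : ∀ α : ℝ, U₁ α ∘L PH α = P₀ ∘L U₁ α) :
    (∀ α : ℝ, HasDerivAt (fun β => U₂ β ∘L V₁ β)
        ((U₂ α ∘L V₁ α) ∘L ℒ (U₁ α (PH α (F₂ α - F₁ α)))) α) ∧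
    (∀ α : ℝ, P₀ (U₁ α (PH α (F₂ α - F₁ α))) = U₁ α (PH α (F₂ α - F₁ α))) :=
  connecting_transform_secular_generator_general ℒ P₀ SH PH U₁ V₁ U₂ H' F₁ F₂ G₁ G₂ hPHproj hG₁ hG₂
    hU₂ hV₁ hcanon hintertwine
end

section
/- In the non-recursive triangular algorithm for the direct Lie–Deprit transform: define f_k^{(N)} = Σ_{j=k}^N α^j H_{j−k} for 0 ≤ k ≤ N and recursively f_k^{(n)} = f_k^{(n+1)} + (1/(n+1)) L_{G_{n−k}} f_{n+1}^{(n+1)} for k = 0,…,n, n = N−1,…,0. Then Σ_{k=0}^{n} U_k f_k^{(n)} is independent of n (for 0 ≤ n ≤ N, modulo α^{N+1}), where U_k satisfy U₀ = 1 and U_n = (1/n) Σ_{k=0}^{n−1} U_k L_{G_{n−k−1}}; consequently f_0^{(0)} = Σ_{k=0}^N U_k f_k^{(N)} = (Σ_{n=0}^N α^n U_n)(Σ_{n=0}^N α^n H_n) mod α^{N+1}. -/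
open Finset

/-- Coefficients (in `α`) of the ancillary functions of the triangular
algorithm.  `triCoeff N H L i k j` is the coefficient of `α^j` in `f_k^{(N−i)}`:
the top row is `f_k^{(N)} = Σ_{j=k}^N α^j H_{j−k}`, and the recursion
`f_k^{(n)} = f_k^{(n+1)} + (1/(n+1)) L_{G_{n−k}} f_{n+1}^{(n+1)}` (with
`n + 1 = N − i`) descends the triangle. -/
def triCoeff {M : Type*} [AddCommGroup M] [Module ℚ M]
    (N : ℕ) (H : ℕ → M) (L : ℕ → Module.End ℚ M) : ℕ → ℕ → ℕ → M
  | 0 => fun k j => if k ≤ j ∧ j ≤ N ∧ k ≤ N then H (j - k) else 0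
  | (i + 1) => fun k j =>
      triCoeff N H L i k j
        + ((N - i : ℕ) : ℚ)⁻¹ • (L (N - i - 1 - k)) (triCoeff N H L i (N - i) j)

section TriangularAlgorithm

variable {M : Type*} [AddCommGroup M] [Module ℚ M] {N : ℕ} {H : ℕ → M} {L : ℕ → Module.End ℚ M}

theorem triCoeff_zero_of_le {k j : ℕ} (hkj : k ≤ j) (hjN : j ≤ N) :
    triCoeff N H L 0 k j = H (j - k) :=
  if_pos ⟨hkj, hjN, hkj.trans hjN⟩

theorem triCoeff_zero_of_lt {k j : ℕ} (hjk : j < k) : triCoeff N H L 0 k j = 0 :=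
  if_neg fun h => absurd h.1 hjk.not_ge

theorem triCoeff_sub_eq {n : ℕ} (hn : n < N) (k j : ℕ) :
    triCoeff N H L (N - n) k j
      = triCoeff N H L (N - (n + 1)) k j
        + ((n + 1 : ℕ) : ℚ)⁻¹ • L (n - k) (triCoeff N H L (N - (n + 1)) (n + 1) j) := by
  obtain ⟨i, hi⟩ : ∃ i, N - n = i + 1 := ⟨N - (n + 1), by omega⟩
  rw [hi, show N - (n + 1) = i by omega]
  have hNi : N - i = n + 1 := by omega
  simp only [triCoeff, hNi, Nat.add_sub_cancel]

theorem deprit_succ_apply {U : ℕ → Module.End ℚ M}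
    (hU : ∀ n : ℕ, 1 ≤ n → U n = (n : ℚ)⁻¹ • ∑ k ∈ range n, U k ∘ₗ L (n - k - 1))
    (n : ℕ) (x : M) :
    U (n + 1) x = ∑ k ∈ range (n + 1), ((n + 1 : ℕ) : ℚ)⁻¹ • U k (L (n - k) x) := by
  rw [hU (n + 1) n.succ_pos, smul_sum]
  simp only [LinearMap.sum_apply, LinearMap.smul_apply, LinearMap.comp_apply,
    Nat.add_sub_cancel, Nat.sub_right_comm (n + 1) _ 1]

/-- The correction terms `(n + 1)⁻¹ • U k (L (n - k) f_{n+1})` of one step sum, by the Deprit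
recursion, to `U (n + 1) f_{n+1}`: the term `k = n + 1` of the longer sum. -/
theorem sum_triCoeff_sub_eq_succ {U : ℕ → Module.End ℚ M}
    (hU : ∀ n : ℕ, 1 ≤ n → U n = (n : ℚ)⁻¹ • ∑ k ∈ range n, U k ∘ₗ L (n - k - 1))
    {n : ℕ} (hn : n < N) (j : ℕ) :
    ∑ k ∈ range (n + 1), U k (triCoeff N H L (N - n) k j)
      = ∑ k ∈ range (n + 2), U k (triCoeff N H L (N - (n + 1)) k j) := by
  simp only [triCoeff_sub_eq hn, map_add, map_smul, sum_add_distrib]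
  rw [sum_range_succ _ (n + 1), deprit_succ_apply hU]

theorem sum_triCoeff_sub_eq_sum_triCoeff_zero {U : ℕ → Module.End ℚ M}
    (hU : ∀ n : ℕ, 1 ≤ n → U n = (n : ℚ)⁻¹ • ∑ k ∈ range n, U k ∘ₗ L (n - k - 1))
    {n : ℕ} (hn : n ≤ N) (j : ℕ) :
    ∑ k ∈ range (n + 1), U k (triCoeff N H L (N - n) k j)
      = ∑ k ∈ range (N + 1), U k (triCoeff N H L 0 k j) := by
  induction hn using Nat.decreasingInduction with
  | self => rw [Nat.sub_self]
  | of_succ n hn ih => rw [sum_triCoeff_sub_eq_succ hU hn, ih]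

theorem sum_triCoeff_zero (U : ℕ → Module.End ℚ M) {j : ℕ} (hjN : j ≤ N) :
    ∑ k ∈ range (N + 1), U k (triCoeff N H L 0 k j) = ∑ k ∈ range (j + 1), U k (H (j - k)) := by
  rw [← sum_range_add_sum_Ico _ (by omega : j + 1 ≤ N + 1)]
  have hlow : ∀ k ∈ range (j + 1), U k (triCoeff N H L 0 k j) = U k (H (j - k)) := by
    intro k hk
    rw [triCoeff_zero_of_le (Nat.lt_succ_iff.mp (mem_range.mp hk)) hjN]
  have hhigh : ∀ k ∈ Ico (j + 1) (N + 1), U k (triCoeff N H L 0 k j) = 0 := by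
    intro k hk
    rw [triCoeff_zero_of_lt (mem_Ico.mp hk).1, map_zero]
  rw [sum_congr rfl hlow, sum_eq_zero hhigh, add_zero]

end TriangularAlgorithm

/-- Correctness of the non-recursive triangular algorithm for the direct
Lie–Deprit transform: with `f_k^{(N)} = Σ_{j=k}^N α^j H_{j−k}`, the downward
recursion `f_k^{(n)} = f_k^{(n+1)} + (1/(n+1)) L_{G_{n−k}} f_{n+1}^{(n+1)}`, and
the Deprit coefficients `U₀ = 1`, `Uₙ = (1/n) Σ_{k=0}^{n−1} U_k L_{G_{n−k−1}}`,
the sums `Σ_{k=0}^n U_k f_k^{(n)}` are independent of `n` (modulo `α^{N+1}`),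
and consequently `f_0^{(0)} = (Σ αⁿ Uₙ)(Σ αⁿ Hₙ) mod α^{N+1}`, i.e. the `j`-th
coefficient of `f_0^{(0)}` is `Σ_{k=0}^j U_k H_{j−k}` for `j ≤ N`. -/
theorem triangular_algorithm_correct
    {M : Type*} [AddCommGroup M] [Module ℚ M]
    (N : ℕ) (H : ℕ → M) (L : ℕ → Module.End ℚ M)
    (U : ℕ → Module.End ℚ M)
    (hU0 : U 0 = 1)
    (hU : ∀ n : ℕ, 1 ≤ n →
      U n = (n : ℚ)⁻¹ • ∑ k ∈ range n, U k ∘ₗ L (n - k - 1)) :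
    (∀ n : ℕ, n ≤ N → ∀ j : ℕ, j ≤ N →
      ∑ k ∈ range (n + 1), (U k) (triCoeff N H L (N - n) k j)
        = ∑ k ∈ range (N + 1), (U k) (triCoeff N H L 0 k j)) ∧
    (∀ j : ℕ, j ≤ N →
      triCoeff N H L N 0 j = ∑ k ∈ range (j + 1), (U k) (H (j - k))) := by
  refine ⟨fun n hn j _ => sum_triCoeff_sub_eq_sum_triCoeff_zero hU hn j, fun j hj => ?_⟩
  have hbottom := sum_triCoeff_sub_eq_sum_triCoeff_zero (H := H) hU (Nat.zero_le N) j
  rw [Nat.sub_zero, sum_range_one, hU0, Module.End.one_apply] at hbottom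
  rw [hbottom, sum_triCoeff_zero U hj]
end
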